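/- arXiv:0902.0350 — 2 statements merged into one kernel-verified Lean document; each statement's English description precedes it below -/
import Mathlib

section
/- Let u, v, w be points in R^3 with ‖u-v‖ ≥ 2, ‖u-w‖ ≥ 2, ‖v-w‖ ≤ 3.2. Then the distance from u to the segment [v,w] is at least √(2^2 − (3.2/2)^2) = 1.2. -/
lemma seg_norm_sq {E : Type*} [NormedAddCommGroup E] [InnerProductSpace ℝ E]
    (u v w : E) (a b : ℝ) (hab : a + b = 1) :
    ‖a • (u - v) + b • (u - w)‖ ^ 2
      = a * ‖u - v‖ ^ 2 + b * ‖u - w‖ ^ 2 - a * b * ‖v - w‖ ^ 2 := by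
  have h1 : ‖a • (u - v) + b • (u - w)‖ ^ 2
      = ‖a • (u - v)‖ ^ 2 + 2 * inner ℝ (a • (u - v)) (b • (u - w)) + ‖b • (u - w)‖ ^ 2 :=
    norm_add_sq_real _ _
  have h2 : ‖v - w‖ ^ 2 = ‖u - v‖ ^ 2 - 2 * inner ℝ (u - v) (u - w) + ‖u - w‖ ^ 2 := by
    have : v - w = (u - w) - (u - v) := by abel
    rw [this, norm_sub_sq_real, real_inner_comm]; ring
  have h3 : (inner ℝ (a • (u - v)) (b • (u - w)) : ℝ) = a * b * inner ℝ (u - v) (u - w) := by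
    rw [real_inner_smul_left, real_inner_smul_right]; ring
  have h4 : ‖a • (u - v)‖ ^ 2 = a ^ 2 * ‖u - v‖ ^ 2 := by
    rw [norm_smul]; simp [mul_pow]
  have h5 : ‖b • (u - w)‖ ^ 2 = b ^ 2 * ‖u - w‖ ^ 2 := by
    rw [norm_smul]; simp [mul_pow]
  rw [h1, h3, h4, h5, h2]
  linear_combination (a * ‖u - v‖ ^ 2 + b * ‖u - w‖ ^ 2) * hab

theorem dist_to_segment_ge (u v w : EuclideanSpace ℝ (Fin 3))
    (huv : ‖u - v‖ ≥ 2) (huw : ‖u - w‖ ≥ 2) (hvw : ‖v - w‖ ≤ 3.2) :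
    Metric.infDist u (segment ℝ v w) ≥ Real.sqrt (2^2 - (3.2/2)^2) := by
  have hsq : Real.sqrt (2^2 - (3.2/2)^2) = 1.2 := by
    rw [show (2^2 - (3.2/2)^2 : ℝ) = 1.2 ^ 2 by norm_num]
    exact Real.sqrt_sq (by norm_num)
  rw [hsq, ge_iff_le, ← not_lt]
  intro hlt
  obtain ⟨y, hy, hdy⟩ := (Metric.infDist_lt_iff ⟨v, left_mem_segment ℝ v w⟩).mp hlt
  obtain ⟨a, b, ha, hb, hab, rfl⟩ := hy
  refine absurd hdy (not_lt.mpr ?_)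
  have key : u - (a • v + b • w) = a • (u - v) + b • (u - w) := by
    match_scalars <;> linarith
  have hd : dist u (a • v + b • w) = ‖a • (u - v) + b • (u - w)‖ := by
    rw [dist_eq_norm, key]
  rw [hd]
  have hexp := seg_norm_sq u v w a b hab
  have hC : (0:ℝ) ≤ ‖v - w‖ := norm_nonneg _
  have hn : (0:ℝ) ≤ ‖a • (u - v) + b • (u - w)‖ := norm_nonneg _
  have hA2 : (4:ℝ) ≤ ‖u - v‖ ^ 2 := by nlinarith [norm_nonneg (u - v)]
  have hB2 : (4:ℝ) ≤ ‖u - w‖ ^ 2 := by nlinarith [norm_nonneg (u - w)]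
  have hC2 : ‖v - w‖ ^ 2 ≤ 10.24 := by nlinarith
  have hn2 : (1.44:ℝ) ≤ ‖a • (u - v) + b • (u - w)‖ ^ 2 := by
    rw [hexp]
    nlinarith [mul_nonneg ha hb, sq_nonneg (a - b),
      mul_nonneg (mul_nonneg ha hb) (sub_nonneg.mpr hC2)]
  nlinarith
end

section
/- A segment cannot have both endpoints far from each point of a triangle and still be short: if ‖u1-u2‖ ≤ 3.2 and each of u1, u2 has distance ≥ 2 from each of three points 0, v, w with ‖v-w‖ = 2, ‖v‖, ‖w‖ ≤ 2.51, and the segment [u1,u2] intersects the convex hull of {0,v,w} at a point p, then p lies in the set X of points of the triangle at distance ≥ 1.2 from each vertex. -/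
set_option maxHeartbeats 1000000 in
lemma seg_dist_aux {E : Type*} [NormedAddCommGroup E] [InnerProductSpace ℝ E]
    (a u1 u2 p : E) (h1 : 2 ≤ ‖a - u1‖) (h2 : 2 ≤ ‖a - u2‖)
    (h12 : ‖u1 - u2‖ ≤ 3.2) (hp : p ∈ segment ℝ u1 u2) :
    1.2 ≤ ‖a - p‖ := by
  obtain ⟨s, t, hs, ht, hst, rfl⟩ := hp
  have key : a - (s • u1 + t • u2) = s • (a - u1) + t • (a - u2) := by
    match_scalars <;> linarith
  rw [key]
  set x := a - u1
  set y := a - u2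
  have hxy : x - y = u2 - u1 := by simp only [x, y]; abel
  have h12' : ‖x - y‖ ≤ 3.2 := by rw [hxy, norm_sub_rev]; exact h12
  have e1 : ‖s • x + t • y‖ ^ 2 = s ^ 2 * ‖x‖ ^ 2 + 2 * (s * t) * inner ℝ x y + t ^ 2 * ‖y‖ ^ 2 := by
    rw [norm_add_sq_real, real_inner_smul_left, real_inner_smul_right,
      norm_smul, norm_smul]
    simp [abs_of_nonneg hs, abs_of_nonneg ht]; ring
  have e2 : ‖x - y‖ ^ 2 = ‖x‖ ^ 2 - 2 * inner ℝ x y + ‖y‖ ^ 2 := by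
    rw [norm_sub_sq_real]
  have hx0 : (0:ℝ) ≤ ‖x‖ := norm_nonneg _
  have hy0 : (0:ℝ) ≤ ‖y‖ := norm_nonneg _
  have hn0 : (0:ℝ) ≤ ‖s • x + t • y‖ := norm_nonneg _
  have hxy0 : (0:ℝ) ≤ ‖x - y‖ := norm_nonneg _
  have hX : 4 ≤ ‖x‖ ^ 2 := by nlinarith
  have hY : 4 ≤ ‖y‖ ^ 2 := by nlinarith
  have hD : ‖x - y‖ ^ 2 ≤ 10.24 := by nlinarith
  have hD0 : 0 ≤ ‖x - y‖ ^ 2 := sq_nonneg _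
  have hst4 : s * t ≤ 1 / 4 := by nlinarith [sq_nonneg (s - t)]
  have hst0 : 0 ≤ s * t := mul_nonneg hs ht
  have e3 : ‖s • x + t • y‖ ^ 2 = s * ‖x‖ ^ 2 + t * ‖y‖ ^ 2 - s * t * ‖x - y‖ ^ 2 := by
    linear_combination e1 + s * t * e2 + (s * ‖x‖ ^ 2 + t * ‖y‖ ^ 2) * hst
  have h4 : 1.44 ≤ ‖s • x + t • y‖ ^ 2 := by nlinarith [mul_le_mul hst4 hD hD0 (by norm_num : (0:ℝ) ≤ 1/4)]
  nlinarith

theorem segment_triangle_intersection_in_core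
    (u1 u2 v w p : EuclideanSpace ℝ (Fin 3))
    (h12 : ‖u1 - u2‖ ≤ 3.2)
    (h1o : dist u1 0 ≥ 2) (h1v : dist u1 v ≥ 2) (h1w : dist u1 w ≥ 2)
    (h2o : dist u2 0 ≥ 2) (h2v : dist u2 v ≥ 2) (h2w : dist u2 w ≥ 2)
    (hvw : ‖v - w‖ = 2) (hv : ‖v‖ ≤ 2.51) (hw : ‖w‖ ≤ 2.51)
    (hp1 : p ∈ segment ℝ u1 u2)
    (hp2 : p ∈ convexHull ℝ ({0, v, w} : Set (EuclideanSpace ℝ (Fin 3)))) :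
    p ∈ {x ∈ convexHull ℝ ({0, v, w} : Set (EuclideanSpace ℝ (Fin 3))) |
      1.2 ≤ dist x 0 ∧ 1.2 ≤ dist x v ∧ 1.2 ≤ dist x w} := by
  refine ⟨hp2, ?_, ?_, ?_⟩
  · have := seg_dist_aux 0 u1 u2 p (by rw [← dist_eq_norm, dist_comm]; exact h1o)
      (by rw [← dist_eq_norm, dist_comm]; exact h2o) h12 hp1
    rw [dist_eq_norm, ← norm_neg]; simpa using this
  · have := seg_dist_aux v u1 u2 p (by rw [← dist_eq_norm, dist_comm]; exact h1v)
      (by rw [← dist_eq_norm, dist_comm]; exact h2v) h12 hp1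
    rw [dist_eq_norm, ← norm_neg]; simpa using this
  · have := seg_dist_aux w u1 u2 p (by rw [← dist_eq_norm, dist_comm]; exact h1w)
      (by rw [← dist_eq_norm, dist_comm]; exact h2w) h12 hp1
    rw [dist_eq_norm, ← norm_neg]; simpa using this
end
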